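/- arXiv:2604.22611 — 2 statements merged into one kernel-verified Lean document; each statement's English description precedes it below -/
import Mathlib

section
/- Let f be a fitness function on the biallelic hypercube {0,1}^L with no two adjacent genotypes having equal fitness, and suppose the landscape contains no sign epistasis (every square motif is magnitude epistasis). Then for any two genotypes g and h at Hamming distance d with f(g) < f(h) such that some fitness-increasing direct path from g to h exists, every one of the d! direct paths from g to h is fitness-increasing. -/
/-- Flip coordinate `i` of a biallelic genotype. -/
def flp {L : ℕ} (g : Fin L → Bool) (i : Fin L) : Fin L → Bool :=
  Function.update g i (!g i)

/-- Hamming distance between genotypes. -/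
def hamming {L : ℕ} (g h : Fin L → Bool) : ℕ :=
  (Finset.univ.filter fun i => g i ≠ h i).card

/-- Endpoint of the path obtained by applying a list of coordinate flips. -/
def walk {L : ℕ} (g : Fin L → Bool) : List (Fin L) → (Fin L → Bool)
  | [] => g
  | i :: l => walk (flp g i) l

/-- A path (list of flips) is accessible if fitness strictly increases at every step. -/
def Accessible {L : ℕ} (f : (Fin L → Bool) → ℝ) : (Fin L → Bool) → List (Fin L) → Prop
  | _, [] => True
  | g, i :: l => f g < f (flp g i) ∧ Accessible f (flp g i) l

/-- Mutation `i` changes the sign of its fitness effect depending on the presence of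
mutation `j`. -/
def SignFlip {L : ℕ} (f : (Fin L → Bool) → ℝ) (g : Fin L → Bool) (i j : Fin L) : Prop :=
  ¬ ((f g < f (flp g i)) ↔ (f (flp g j) < f (flp (flp g j) i)))

/-- Simple sign epistasis on the square motif at background `g`, loci `i ≠ j`:
exactly one of the two mutations changes sign. -/
def SSE {L : ℕ} (f : (Fin L → Bool) → ℝ) (g : Fin L → Bool) (i j : Fin L) : Prop :=
  Xor' (SignFlip f g i j) (SignFlip f g j i)

/-- Reciprocal sign epistasis: both mutations change sign. -/
def RSE {L : ℕ} (f : (Fin L → Bool) → ℝ) (g : Fin L → Bool) (i j : Fin L) : Prop :=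
  SignFlip f g i j ∧ SignFlip f g j i

/-- A peak (local fitness maximum). -/
def Peak {L : ℕ} (f : (Fin L → Bool) → ℝ) (g : Fin L → Bool) : Prop :=
  ∀ i, f (flp g i) < f g

lemma flp_apply {L : ℕ} (g : Fin L → Bool) (i j : Fin L) :
    flp g i j = if j = i then !g i else g j := by
  simp [flp, Function.update]

lemma ham_flip_eq {L : ℕ} (g h : Fin L → Bool) (i : Fin L) (hi : g i = h i) :
    hamming (flp g i) h = hamming g h + 1 := by
  have hset : (Finset.univ.filter fun j => flp g i j ≠ h j)
      = insert i (Finset.univ.filter fun j => g j ≠ h j) := by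
    ext j
    by_cases hj : j = i
    · subst hj
      simp [flp_apply, hi]
    · simp [flp_apply, hj]
  have hnot : i ∉ (Finset.univ.filter fun j => g j ≠ h j) := by simp [hi]
  simp [hamming, hset, Finset.card_insert_of_notMem hnot]

lemma ham_flip_ne {L : ℕ} (g h : Fin L → Bool) (i : Fin L) (hi : g i ≠ h i) :
    hamming (flp g i) h + 1 = hamming g h := by
  have hset : (Finset.univ.filter fun j => flp g i j ≠ h j)
      = (Finset.univ.filter fun j => g j ≠ h j).erase i := by
    ext j
    by_cases hj : j = i
    · subst hj
      simp [flp_apply]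
      revert hi; cases g j <;> cases h j <;> simp
    · simp [flp_apply, hj]
  have hmem : i ∈ (Finset.univ.filter fun j => g j ≠ h j) := by simp [hi]
  simpa [hamming, hset] using Finset.card_erase_add_one hmem

lemma ham_le_walk {L : ℕ} (h : Fin L → Bool) :
    ∀ (l : List (Fin L)) (g : Fin L → Bool), walk g l = h → hamming g h ≤ l.length := by
  intro l
  induction l with
  | nil => intro g hw; simp [walk] at hw; subst hw; simp [hamming]
  | cons i l ih =>
    intro g hw
    have h1 := ih (flp g i) hw
    by_cases hi : g i = h i
    · have := ham_flip_eq g h i hi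
      simp only [List.length_cons]
      omega
    · have := ham_flip_ne g h i hi
      simp only [List.length_cons]
      omega

lemma step_ne {L : ℕ} (g h : Fin L → Bool) (i : Fin L) (l : List (Fin L))
    (hlen : (i :: l).length = hamming g h) (hw : walk g (i :: l) = h) :
    g i ≠ h i ∧ l.length = hamming (flp g i) h := by
  have hw' : walk (flp g i) l = h := hw
  have hle := ham_le_walk h l (flp g i) hw'
  simp only [List.length_cons] at hlen
  by_cases hi : g i = h i
  · have := ham_flip_eq g h i hi
    omega
  · have := ham_flip_ne g h i hi
    exact ⟨hi, by omega⟩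

lemma sign_const {L : ℕ} (f : (Fin L → Bool) → ℝ)
    (hnosse : ∀ (g : Fin L → Bool) (i j : Fin L), i ≠ j → ¬ SignFlip f g i j) :
    ∀ (n : ℕ) (g g' : Fin L → Bool) (i : Fin L), hamming g g' = n → g i = g' i →
      ((f g < f (flp g i)) ↔ (f g' < f (flp g' i))) := by
  intro n
  induction n with
  | zero =>
    intro g g' i hn _
    have : g = g' := by
      funext j
      by_contra hj
      have hmem : j ∈ (Finset.univ.filter fun k => g k ≠ g' k) := by simp [hj]
      have hpos : 0 < hamming g g' := by
        rw [hamming]; exact Finset.card_pos.mpr ⟨j, hmem⟩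
      omega
    subst this; rfl
  | succ n ih =>
    intro g g' i hn hi
    have hpos : 0 < hamming g g' := by omega
    obtain ⟨j, hj⟩ := Finset.card_pos.mp hpos
    simp only [Finset.mem_filter] at hj
    have hjne : g j ≠ g' j := hj.2
    have hij : i ≠ j := fun he => hjne (he ▸ hi)
    have key := hnosse g i j hij
    rw [SignFlip, not_not] at key
    have h1 : hamming (flp g j) g' = n := by
      have := ham_flip_ne g g' j hjne
      omega
    have h2 : flp g j i = g' i := by
      rw [flp_apply]
      simp [hij, hi]
    exact key.trans (ih (flp g j) g' i h1 h2)

/-- with no sign epistasis, if some fitness-increasing direct path from `g`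
to `h` exists (with `f g < f h`), then every direct path from `g` to `h` is
fitness-increasing. -/
theorem stmt_1 (L : ℕ) (f : (Fin L → Bool) → ℝ)
    (hne : ∀ (g : Fin L → Bool) (i : Fin L), f (flp g i) ≠ f g)
    (hnosse : ∀ (g : Fin L → Bool) (i j : Fin L), i ≠ j → ¬ SignFlip f g i j)
    (g h : Fin L → Bool) (hlt : f g < f h)
    (hex : ∃ l : List (Fin L),
      l.length = hamming g h ∧ walk g l = h ∧ Accessible f g l) :
    ∀ l : List (Fin L), l.length = hamming g h → walk g l = h → Accessible f g l := by
  obtain ⟨l0, hl0, hw0, hacc0⟩ := hex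
  -- every "toward-h" flip at a coordinate in the diff set is beneficial, on any background
  have C : ∀ (l : List (Fin L)) (g0 : Fin L → Bool), l.length = hamming g0 h →
      walk g0 l = h → Accessible f g0 l →
      ∀ i, g0 i ≠ h i → ∀ g', g' i ≠ h i → f g' < f (flp g' i) := by
    intro l
    induction l with
    | nil =>
      intro g0 hlen hw _ i hi
      exfalso
      have hmem : i ∈ (Finset.univ.filter fun k => g0 k ≠ h k) := by simp [hi]
      have hpos : 0 < hamming g0 h := by
        rw [hamming]; exact Finset.card_pos.mpr ⟨i, hmem⟩
      simp only [List.length_nil] at hlen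
      omega
    | cons j l ih =>
      intro g0 hlen hw hacc i hi
      obtain ⟨hj, hlen'⟩ := step_ne g0 h j l hlen hw
      by_cases hij : i = j
      · subst hij
        intro g' hi'
        have heq : g0 i = g' i := by
          revert hi hi'; cases g' i <;> cases g0 i <;> cases h i <;> simp
        exact (sign_const f hnosse (hamming g0 g') g0 g' i rfl heq).mp hacc.1
      · have hnext : flp g0 j i ≠ h i := by
          rw [flp_apply]; simpa [hij] using hi
        exact ih (flp g0 j) hlen' hw hacc.2 i hnext
  have good := C l0 g hl0 hw0 hacc0
  -- any direct path from a genotype "between" g and h is accessible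
  have D : ∀ (l : List (Fin L)) (g0 : Fin L → Bool),
      (∀ i, g0 i ≠ h i → g0 i = g i) →
      l.length = hamming g0 h → walk g0 l = h → Accessible f g0 l := by
    intro l
    induction l with
    | nil => intro g0 _ _ _; trivial
    | cons j l ih =>
      intro g0 hbet hlen hw
      obtain ⟨hj, hlen'⟩ := step_ne g0 h j l hlen hw
      have hgj : g j ≠ h j := by rw [← hbet j hj]; exact hj
      refine ⟨good j hgj g0 hj, ?_⟩
      refine ih (flp g0 j) ?_ hlen' hw
      intro i hi
      rw [flp_apply] at hi ⊢
      by_cases hij : i = j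
      · subst hij; simp at hi ⊢
        revert hi hj; cases g0 i <;> cases h i <;> simp
      · simp [hij] at hi ⊢
        exact hbet i hi
  exact fun l hlen hw => D l g (fun _ _ => rfl) hlen hw
end

section
/- Let f be a fitness function on the biallelic hypercube {0,1}^L with no two adjacent genotypes having equal fitness. If there exists a reversing accessible path (a fitness-increasing path in which some locus is flipped at least twice, i.e. a back-mutation occurs), then the landscape contains a simple sign epistasis motif. -/
lemma flp_flp_self {L : ℕ} (g : Fin L → Bool) (i : Fin L) : flp (flp g i) i = g := by
  funext k
  by_cases h : k = i <;> simp [flp, Function.update_apply, h]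

lemma flp_comm {L : ℕ} (g : Fin L → Bool) {i j : Fin L} (h : i ≠ j) :
    flp (flp g i) j = flp (flp g j) i := by
  funext k
  by_cases hi : k = i
  · by_cases hj : k = j
    · exact absurd (hi.symm.trans hj) h
    · simp [flp, Function.update_apply, hi, hj, h.symm, h]
  · by_cases hj : k = j <;> simp [flp, Function.update_apply, hi, hj, h.symm, h]

lemma acc_append_left {L : ℕ} (f : (Fin L → Bool) → ℝ) :
    ∀ (l l' : List (Fin L)) (g : Fin L → Bool),
      Accessible f g (l ++ l') → Accessible f g l := by
  intro l
  induction l with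
  | nil => intro l' g _; trivial
  | cons a t ih =>
    intro l' g h
    obtain ⟨h1, h2⟩ := h
    exact ⟨h1, ih l' _ h2⟩

lemma acc_append_right {L : ℕ} (f : (Fin L → Bool) → ℝ) :
    ∀ (l l' : List (Fin L)) (g : Fin L → Bool),
      Accessible f g (l ++ l') → Accessible f (walk g l) l' := by
  intro l
  induction l with
  | nil => intro l' g h; exact h
  | cons a t ih =>
    intro l' g h
    exact ih l' _ h.2

lemma mem_split_first {α : Type*} {a : α} :
    ∀ {l : List α}, a ∈ l → ∃ s u, l = s ++ a :: u ∧ a ∉ s := by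
  intro l
  induction l with
  | nil => simp
  | cons b t ih =>
    intro h
    by_cases hab : a = b
    · exact ⟨[], t, by simp [hab], by simp⟩
    · have hat : a ∈ t := by
        rcases List.mem_cons.1 h with h' | h'
        · exact absurd h' hab
        · exact h'
      obtain ⟨s, u, rfl, hn⟩ := ih hat
      exact ⟨b :: s, u, rfl, by simp [hab, hn]⟩

lemma not_nodup_split {α : Type*} :
    ∀ {l : List α}, ¬ l.Nodup →
      ∃ (l₁ : List α) (x : α) (l₂ l₃ : List α),
        l = l₁ ++ x :: (l₂ ++ x :: l₃) ∧ x ∉ l₂ := by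
  intro l
  induction l with
  | nil => intro h; exact absurd List.nodup_nil h
  | cons a t ih =>
    intro h
    by_cases hat : a ∈ t
    · obtain ⟨s, u, rfl, hn⟩ := mem_split_first hat
      exact ⟨[], a, s, u, rfl, hn⟩
    · have hnt : ¬ t.Nodup := fun hd => h (List.nodup_cons.2 ⟨hat, hd⟩)
      obtain ⟨l₁, x, l₂, l₃, rfl, hx⟩ := ih hnt
      exact ⟨a :: l₁, x, l₂, l₃, rfl, hx⟩

lemma core_sse {L : ℕ} (f : (Fin L → Bool) → ℝ)
    (hne : ∀ (g : Fin L → Bool) (i : Fin L), f (flp g i) ≠ f g) :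
    ∀ (l : List (Fin L)) (i : Fin L) (b : Fin L → Bool), i ∉ l → Accessible f b l →
      f (flp b i) < f b → f (walk b l) < f (flp (walk b l) i) →
      ∃ (g' : Fin L → Bool) (p q : Fin L), p ≠ q ∧ SSE f g' p q := by
  intro l
  induction l with
  | nil =>
    intro i b _ _ h1 h2
    simp only [walk] at h2
    linarith
  | cons j t ih =>
    intro i b hmem hacc h1 h2
    have hij : i ≠ j := fun h => hmem (h ▸ (List.mem_cons_self (a := j) (l := t)))
    obtain ⟨hstep, hacc'⟩ := hacc
    by_cases hc : f (flp (flp b j) i) < f (flp b j)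
    · exact ih i (flp b j) (fun h => hmem (List.mem_cons_of_mem _ h)) hacc' hc h2
    · have hc' : f (flp b j) < f (flp (flp b j) i) :=
        lt_of_le_of_ne (not_lt.1 hc) (Ne.symm (hne _ _))
      have e1 : flp (flp b i) i = b := flp_flp_self _ _
      have e2 : flp (flp b i) j = flp (flp b j) i := flp_comm b hij
      have e3 : flp (flp (flp b j) i) i = flp b j := flp_flp_self _ _
      refine ⟨flp b i, i, j, hij, Or.inl ⟨?_, ?_⟩⟩
      · simp only [SignFlip, e1, e2, e3]
        intro hiff
        exact hc (hiff.mp h1)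
      · simp only [SignFlip, e1, e2, e3, not_not]
        constructor
        · intro _; exact hstep
        · intro _; linarith

/-- if there exists a reversing accessible path (a fitness-increasing path in
which some coordinate is flipped at least twice), then the landscape contains an SSE motif. -/
theorem stmt_2 (L : ℕ) (f : (Fin L → Bool) → ℝ)
    (hne : ∀ (g : Fin L → Bool) (i : Fin L), f (flp g i) ≠ f g)
    (hrev : ∃ (g : Fin L → Bool) (l : List (Fin L)), Accessible f g l ∧ ¬ l.Nodup) :
    ∃ (g' : Fin L → Bool) (i j : Fin L), i ≠ j ∧ SSE f g' i j := by
  obtain ⟨g, l, hacc, hnd⟩ := hrev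
  obtain ⟨l₁, x, l₂, l₃, rfl, hx⟩ := not_nodup_split hnd
  have h1 := acc_append_right f l₁ _ g hacc
  obtain ⟨hs, h2⟩ := h1
  have h3 := acc_append_left f l₂ (x :: l₃) _ h2
  have h4 := acc_append_right f l₂ (x :: l₃) _ h2
  obtain ⟨hend, _⟩ := h4
  refine core_sse f hne l₂ x (flp (walk g l₁) x) hx h3 ?_ hend
  rw [flp_flp_self]
  exact hs
end
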